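/- For every integer k ≥ 1, the integer A_k is divisible by 2^{k−1} but not by 2^k, and the integer B_k is divisible by 2^{k−1} but not by 2^k; that is, the 2-adic valuation of A_k and of B_k equals k − 1. -/
import Mathlib


/-- The sequence `A` with `A 0 = A 1 = 1` and
`A k = -4 A (k-1) - 8 A (k-2) + 5 * 2^(k-1)` for `k ≥ 2`. -/
def A : ℕ → ℤ
  | 0 => 1
  | 1 => 1
  | (k + 2) => -4 * A (k + 1) - 8 * A k + 5 * 2 ^ (k + 1)

/-- The sequence `B` with `B 0 = 0`, `B 1 = 1` and
`B k = -4 B (k-1) - 8 B (k-2) + 5 * 2^(k-1)` for `k ≥ 2`. -/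
def B : ℕ → ℤ
  | 0 => 0
  | 1 => 1
  | (k + 2) => -4 * B (k + 1) - 8 * B k + 5 * 2 ^ (k + 1)

private lemma key : ∀ k : ℕ,
    (∃ a : ℤ, Odd a ∧ A (k + 1) = 2 ^ k * a) ∧
    (∃ b : ℤ, Odd b ∧ B (k + 1) = 2 ^ k * b) ∧
    (∃ a : ℤ, Odd a ∧ A (k + 2) = 2 ^ (k + 1) * a) ∧
    (∃ b : ℤ, Odd b ∧ B (k + 2) = 2 ^ (k + 1) * b) := by
  intro k
  induction k with
  | zero =>
    refine ⟨⟨1, odd_one, by norm_num [A]⟩, ⟨1, odd_one, by norm_num [B]⟩,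
      ⟨-1, by decide, by norm_num [A]⟩, ⟨3, by decide, by norm_num [B]⟩⟩
  | succ n ih =>
    obtain ⟨⟨a1, ha1, hA1⟩, ⟨b1, hb1, hB1⟩, ⟨a2, ha2, hA2⟩, ⟨b2, hb2, hB2⟩⟩ := ih
    refine ⟨⟨a2, ha2, hA2⟩, ⟨b2, hb2, hB2⟩,
      ⟨5 - 2 * a2 - 2 * a1, ?_, ?_⟩, ⟨5 - 2 * b2 - 2 * b1, ?_, ?_⟩⟩
    · exact ⟨2 - a2 - a1, by ring⟩
    · show A (n + 3) = _
      rw [show n + 3 = (n + 1) + 2 from rfl, A, hA2, hA1]; ring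
    · exact ⟨2 - b2 - b1, by ring⟩
    · show B (n + 3) = _
      rw [show n + 3 = (n + 1) + 2 from rfl, B, hB2, hB1]; ring

private lemma not_dvd_of_odd {k : ℕ} {x a : ℤ} (ha : Odd a) (hx : x = 2 ^ k * a) :
    ¬ (2 : ℤ) ^ (k + 1) ∣ x := by
  intro h
  rw [hx, pow_succ, mul_dvd_mul_iff_left (by positivity : (2:ℤ)^k ≠ 0)] at h
  exact (Int.not_odd_iff_even.mpr (even_iff_two_dvd.mpr h)) ha

theorem A_B_two_adic_valuation (k : ℕ) (hk : 1 ≤ k) :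
    ((2 : ℤ) ^ (k - 1) ∣ A k ∧ ¬ (2 : ℤ) ^ k ∣ A k) ∧
      ((2 : ℤ) ^ (k - 1) ∣ B k ∧ ¬ (2 : ℤ) ^ k ∣ B k) := by
  obtain ⟨n, rfl⟩ := Nat.exists_eq_add_of_le hk
  rw [Nat.add_comm 1 n]
  obtain ⟨⟨a, ha, hA⟩, ⟨b, hb, hB⟩, _, _⟩ := key n
  simp only [Nat.add_sub_cancel]
  exact ⟨⟨⟨a, hA⟩, not_dvd_of_odd ha hA⟩, ⟨⟨b, hB⟩, not_dvd_of_odd hb hB⟩⟩
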